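/- arXiv:2304.11044 — 3 statements merged into one kernel-verified Lean document; each statement's English description precedes it below -/
import Mathlib

section
/- Let n ≥ 1, let U be an open neighborhood of 0 in ℂⁿ, and let f : U → ℂ be holomorphic with f(0) = 0. Let Ξ be a finite collection of nonzero ℂ-linear functionals ξ : ℂⁿ → ℂ, and assume that the zero set {z ∈ U : f(z) = 0} is contained in the union ⋃_{ξ∈Ξ} ker ξ. Then there exist a functional ξ ∈ Ξ and an open neighborhood U′ ⊆ U of 0 such that f vanishes identically on ker ξ ∩ U′. -/
/-!
Pick `v` outside every `ker ξ`. Then `t ↦ f (t • v)` has an isolated zero at `0`, so `‖f‖` is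
bounded below on a small circle of that line; by the minimum modulus principle every nearby parallel
line `z + ℂ v` still meets the zero set of `f`, hence some `ker ξ`, and the meeting point is the
projection of `z` onto `ker ξ` along `v`. So the product over `ξ` of `f ∘ (projection onto ker ξ)`
vanishes near `0`, and by the identity theorem one factor vanishes identically near `0`, which is
the claim since that projection fixes `ker ξ`.
-/

open Set Metric Filter Topology

theorem exists_forall_apply_ne_zero {k E : Type*} [Field k] [Infinite k] [AddCommGroup E]
    [Module k E] {Ξ : Set (E →ₗ[k] k)} (hΞ : Ξ.Finite) (hne : ∀ ξ ∈ Ξ, ξ ≠ 0) :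
    ∃ v : E, ∀ ξ ∈ Ξ, ξ v ≠ 0 := by
  by_contra! hcover
  have : Finite Ξ := hΞ
  obtain ⟨⟨ξ, hξ⟩, hker⟩ := Subspace.exists_eq_top_of_iUnion_eq_univ
    (p := fun ξ : Ξ => LinearMap.ker (ξ : E →ₗ[k] k)) <| eq_univ_of_forall fun v => by
      obtain ⟨ξ, hξ, hv⟩ := hcover v
      exact mem_iUnion.2 ⟨⟨ξ, hξ⟩, hv⟩
  exact hne ξ hξ (LinearMap.ker_eq_top.1 hker)

section Projection

variable {k E : Type*} [Field k] [AddCommGroup E] [Module k E]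

def kerProjAlong (ξ : E →ₗ[k] k) (v : E) : E →ₗ[k] E :=
  LinearMap.id - ((ξ v)⁻¹ • ξ).smulRight v

theorem kerProjAlong_apply (ξ : E →ₗ[k] k) (v z : E) :
    kerProjAlong ξ v z = z - ((ξ v)⁻¹ * ξ z) • v := by
  simp [kerProjAlong]

theorem kerProjAlong_of_mem_ker {ξ : E →ₗ[k] k} {z : E} (v : E) (hz : ξ z = 0) :
    kerProjAlong ξ v z = z := by
  simp [kerProjAlong_apply, hz]

theorem kerProjAlong_eq_add_smul {ξ : E →ₗ[k] k} {v z : E} {t : k} (hv : ξ v ≠ 0)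
    (h : ξ (z + t • v) = 0) : kerProjAlong ξ v z = z + t • v := by
  rw [map_add, map_smul, smul_eq_mul] at h
  have ht : (ξ v)⁻¹ * ξ z = -t := by
    field_simp
    linear_combination h
  rw [kerProjAlong_apply, ht, neg_smul, sub_neg_eq_add]

end Projection

section Holomorphic

variable {E : Type*} [NormedAddCommGroup E] [NormedSpace ℂ E]

theorem Complex.exists_eq_zero_of_norm_lt_of_le_on_frontier [Nontrivial E] {h : E → ℂ}
    {U : Set E} (hU : Bornology.IsBounded U) (hh : DiffContOnCl ℂ h U) {c : E}
    (hc : c ∈ closure U) {m : ℝ} (hcm : ‖h c‖ < m) (hm : ∀ z ∈ frontier U, m ≤ ‖h z‖) :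
    ∃ z ∈ closure U, h z = 0 := by
  by_contra! hne
  have hm₀ : 0 < m := (norm_nonneg _).trans_lt hcm
  have hinv : ‖(h c)⁻¹‖ ≤ m⁻¹ :=
    Complex.norm_le_of_forall_mem_frontier_norm_le hU (hh.inv hne)
      (fun z hz => by rw [Pi.inv_apply, norm_inv]; exact inv_anti₀ hm₀ (hm z hz)) hc
  rw [norm_inv, inv_le_inv₀ (norm_pos_iff.2 (hne c hc)) hm₀] at hinv
  exact hinv.not_gt hcm

theorem DifferentiableOn.eqOn_zero_of_convex_of_eventuallyEq_zero {g : E → ℂ} {V : Set E}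
    (hg : DifferentiableOn ℂ g V) (hV : IsOpen V) (hVc : Convex ℝ V) {z₀ : E} (hz₀ : z₀ ∈ V)
    (hg₀ : g =ᶠ[𝓝 z₀] 0) : EqOn g 0 V := by
  intro z hz
  set line : ℂ → E := fun t => z₀ + t • (z - z₀)
  have hline : Differentiable ℂ line := (differentiable_id.smul_const _).const_add z₀
  have hD : IsOpen (line ⁻¹' V) := hV.preimage hline.continuous
  have hDc : Convex ℝ (line ⁻¹' V) :=
    (hVc.translate_preimage_right z₀).linear_preimage
      ((LinearMap.toSpanSingleton ℂ E (z - z₀)).restrictScalars ℝ)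
  have hgline : AnalyticOnNhd ℂ (g ∘ line) (line ⁻¹' V) :=
    (hg.comp hline.differentiableOn (mapsTo_preimage _ _)).analyticOnNhd hD
  have hline0 : line 0 = z₀ := by simp [line]
  have := hgline.eqOn_zero_of_preconnected_of_eventuallyEq_zero hDc.isPreconnected
    (by simpa [hline0] using hz₀) (hg₀.comp_tendsto (hline0 ▸ hline.continuous.tendsto 0))
    (show line 1 ∈ V by simpa [line] using hz)
  simpa [line] using this

theorem exists_eqOn_zero_of_prod_eqOn_zero {ι : Type*} {s : Finset ι} {F : ι → E → ℂ}
    {V : Set E} (hV : IsOpen V) (hVc : Convex ℝ V) (hV₀ : V.Nonempty)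
    (hF : ∀ i ∈ s, DifferentiableOn ℂ (F i) V) (hprod : ∀ z ∈ V, ∏ i ∈ s, F i z = 0) :
    ∃ i ∈ s, EqOn (F i) 0 V := by
  classical
  induction s using Finset.induction_on with
  | empty =>
    obtain ⟨z, hz⟩ := hV₀
    simpa using hprod z hz
  | insert a s ha ih =>
    by_cases ha₀ : EqOn (F a) 0 V
    · exact ⟨a, Finset.mem_insert_self a s, ha₀⟩
    obtain ⟨z₁, hz₁, hFz₁⟩ : ∃ z₁ ∈ V, F a z₁ ≠ 0 := by
      simpa [EqOn] using ha₀
    have hFs : ∀ i ∈ s, DifferentiableOn ℂ (F i) V :=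
      fun i hi => hF i (Finset.mem_insert_of_mem hi)
    have hrest : (fun z => ∏ i ∈ s, F i z) =ᶠ[𝓝 z₁] 0 := by
      have hFa := ((hF a (Finset.mem_insert_self a s)).continuousOn.continuousAt
        (hV.mem_nhds hz₁)).eventually_ne hFz₁
      filter_upwards [hFa, hV.mem_nhds hz₁] with z hFaz hz
      have := hprod z hz
      rw [Finset.prod_insert ha] at this
      exact (mul_eq_zero.1 this).resolve_left hFaz
    have hrest_diff : DifferentiableOn ℂ (fun z => ∏ i ∈ s, F i z) V := fun z hz =>
      (HasFDerivWithinAt.finsetProd fun i hi =>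
        (hFs i hi z hz).hasFDerivWithinAt).differentiableWithinAt
    obtain ⟨i, hi, hFi⟩ := ih hFs fun z hz =>
      hrest_diff.eqOn_zero_of_convex_of_eventuallyEq_zero hV hVc hz₁ hrest hz
    exact ⟨i, Finset.mem_insert_of_mem hi, hFi⟩

theorem DifferentiableOn.exists_add_smul_eq_zero_of_norm_sub_lt {f : E → ℂ} {U : Set E}
    (hf : DifferentiableOn ℂ f U) {x z v : E} (hfx : f x = 0) {ε m : ℝ} (hε : 0 < ε)
    (hmf : ∀ t ∈ sphere (0 : ℂ) ε, m ≤ ‖f (x + t • v)‖)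
    (hz : ∀ t ∈ closedBall (0 : ℂ) ε, z + t • v ∈ U ∧ ‖f (z + t • v) - f (x + t • v)‖ < m / 2) :
    ∃ t : ℂ, z + t • v ∈ U ∧ f (z + t • v) = 0 := by
  have hdiff : DifferentiableOn ℂ (fun t : ℂ => f (z + t • v)) (closure (ball 0 ε)) := by
    rw [closure_ball 0 hε.ne']
    exact hf.comp (Differentiable.differentiableOn (by fun_prop)) fun t ht => (hz t ht).1
  have hcenter : ‖f (z + (0 : ℂ) • v)‖ < m / 2 := by
    simpa [hfx] using (hz 0 (mem_closedBall_self hε.le)).2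
  have hsphere : ∀ t ∈ frontier (ball (0 : ℂ) ε), m / 2 ≤ ‖f (z + t • v)‖ := by
    rw [frontier_ball 0 hε.ne']
    intro t ht
    have hdist := (hz t (sphere_subset_closedBall ht)).2
    linarith [hmf t ht, norm_sub_norm_le (f (x + t • v)) (f (z + t • v)),
      norm_sub_rev (f (x + t • v)) (f (z + t • v))]
  obtain ⟨t, ht, hft⟩ := Complex.exists_eq_zero_of_norm_lt_of_le_on_frontier isBounded_ball
    hdiff.diffContOnCl (subset_closure (mem_ball_self hε)) hcenter hsphere
  rw [closure_ball 0 hε.ne'] at ht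
  exact ⟨t, (hz t ht).1, hft⟩

theorem DifferentiableOn.eventually_exists_add_smul_eq_zero {f : E → ℂ} {U : Set E}
    (hf : DifferentiableOn ℂ f U) (hU : IsOpen U) {x v : E} (hx : x ∈ U) (hfx : f x = 0)
    (hline : ∀ᶠ t in 𝓝[≠] (0 : ℂ), f (x + t • v) ≠ 0) :
    ∀ᶠ z in 𝓝 x, ∃ t : ℂ, z + t • v ∈ U ∧ f (z + t • v) = 0 := by
  obtain ⟨ε, hε, hεU⟩ : ∃ ε > 0, ∀ t ∈ closedBall (0 : ℂ) ε,
      x + t • v ∈ U ∧ (t ≠ 0 → f (x + t • v) ≠ 0) := by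
    have hU' : ∀ᶠ t in 𝓝 (0 : ℂ), x + t • v ∈ U :=
      (Continuous.continuousAt (by fun_prop)).preimage_mem_nhds (by simpa using hU.mem_nhds hx)
    exact nhds_basis_closedBall.eventually_iff.1 (hU'.and (eventually_nhdsWithin_iff.1 hline))
  obtain ⟨m, hm, hmf⟩ : ∃ m > 0, ∀ t ∈ sphere (0 : ℂ) ε, m ≤ ‖f (x + t • v)‖ :=
    (isCompact_sphere 0 ε).exists_forall_le'
      (hf.continuousOn.comp (Continuous.continuousOn (by fun_prop))
        fun t ht => (hεU t (sphere_subset_closedBall ht)).1).norm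
      fun t ht => norm_pos_iff.2 <|
        (hεU t (sphere_subset_closedBall ht)).2 (ne_of_mem_sphere ht hε.ne')
  have hclose : ∀ᶠ z in 𝓝 x, ∀ t ∈ closedBall (0 : ℂ) ε,
      z + t • v ∈ U ∧ ‖f (z + t • v) - f (x + t • v)‖ < m / 2 := by
    refine (isCompact_closedBall 0 ε).eventually_forall_of_forall_eventually fun t ht => ?_
    have hfc : ContinuousAt f (x + t • v) :=
      (hf.differentiableAt (hU.mem_nhds (hεU t ht).1)).continuousAt
    have hz : Tendsto (fun p : E × ℂ => p.1 + p.2 • v) (𝓝 (x, t)) (𝓝 (x + t • v)) :=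
      Continuous.tendsto (by fun_prop) _
    have hx' : Tendsto (fun p : E × ℂ => x + p.2 • v) (𝓝 (x, t)) (𝓝 (x + t • v)) :=
      Continuous.tendsto (by fun_prop) _
    have hdist := ((hfc.tendsto.comp hz).sub (hfc.tendsto.comp hx')).norm
    rw [sub_self, norm_zero] at hdist
    filter_upwards [hz (hU.mem_nhds (hεU t ht).1), hdist (Iio_mem_nhds (half_pos hm))]
      with p hpU hpf using ⟨hpU, hpf⟩
  filter_upwards [hclose] with z hz
  exact hf.exists_add_smul_eq_zero_of_norm_sub_lt hfx hε hmf hz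

end Holomorphic

theorem vanishes_on_kernel_of_linear_functional_general
    {n : ℕ}
    (U : Set (Fin n → ℂ)) (hU : IsOpen U) (hU0 : (0 : Fin n → ℂ) ∈ U)
    (f : (Fin n → ℂ) → ℂ) (hf : DifferentiableOn ℂ f U) (hf0 : f 0 = 0)
    (Ξ : Set ((Fin n → ℂ) →ₗ[ℂ] ℂ)) (hΞfin : Ξ.Finite) (hΞne : ∀ ξ ∈ Ξ, ξ ≠ 0)
    (hzero : {z ∈ U | f z = 0} ⊆ ⋃ ξ ∈ Ξ, (LinearMap.ker ξ : Set (Fin n → ℂ))) :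
    ∃ ξ ∈ Ξ, ∃ U' : Set (Fin n → ℂ), IsOpen U' ∧ U' ⊆ U ∧ (0 : Fin n → ℂ) ∈ U' ∧
      ∀ z ∈ (LinearMap.ker ξ : Set (Fin n → ℂ)) ∩ U', f z = 0 := by
  obtain ⟨v, hv⟩ := exists_forall_apply_ne_zero hΞfin hΞne
  have hline : ∀ᶠ t in 𝓝[≠] (0 : ℂ), f (0 + t • v) ≠ 0 := by
    have hU' : ∀ᶠ t in 𝓝 (0 : ℂ), t • v ∈ U :=
      (Continuous.continuousAt (by fun_prop)).preimage_mem_nhds (by simpa using hU.mem_nhds hU0)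
    filter_upwards [self_mem_nhdsWithin, nhdsWithin_le_nhds hU'] with t (ht : t ≠ 0) htU hft
    rw [zero_add] at hft
    obtain ⟨ξ, hξ, hξt⟩ := mem_iUnion₂.1 (hzero ⟨htU, hft⟩)
    exact hv ξ hξ ((smul_eq_zero.1 ((map_smul ξ t v).symm.trans hξt)).resolve_left ht)
  have hproj (ξ : (Fin n → ℂ) →ₗ[ℂ] ℂ) : Differentiable ℂ (kerProjAlong ξ v) :=
    (LinearMap.toContinuousLinearMap (kerProjAlong ξ v)).differentiable
  have hnear : ∀ᶠ z in 𝓝 0, (∃ t : ℂ, z + t • v ∈ U ∧ f (z + t • v) = 0) ∧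
      ∀ ξ ∈ Ξ, kerProjAlong ξ v z ∈ U :=
    (hf.eventually_exists_add_smul_eq_zero hU hU0 hf0 hline).and <| hΞfin.eventually_all.2
      fun ξ _ => (hproj ξ).continuous.continuousAt.preimage_mem_nhds
        (by simpa using hU.mem_nhds hU0)
  obtain ⟨δ, hδ, hball⟩ := eventually_nhds_iff_ball.1 hnear
  have hprod : ∀ z ∈ ball 0 δ, ∏ ξ ∈ hΞfin.toFinset, f (kerProjAlong ξ v z) = 0 := by
    intro z hz
    obtain ⟨⟨t, htU, hft⟩, -⟩ := hball z hz
    obtain ⟨ξ, hξ, hξt⟩ := mem_iUnion₂.1 (hzero ⟨htU, hft⟩)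
    refine Finset.prod_eq_zero (hΞfin.mem_toFinset.2 hξ) ?_
    rwa [kerProjAlong_eq_add_smul (hv ξ hξ) hξt]
  obtain ⟨ξ, hξ, hfξ⟩ := exists_eqOn_zero_of_prod_eqOn_zero isOpen_ball (convex_ball 0 δ)
    ⟨0, mem_ball_self hδ⟩ (fun ξ hξ => hf.comp (hproj ξ).differentiableOn
      fun z hz => (hball z hz).2 ξ (hΞfin.mem_toFinset.1 hξ)) hprod
  refine ⟨ξ, hΞfin.mem_toFinset.1 hξ, ball 0 δ ∩ U, isOpen_ball.inter hU, inter_subset_right,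
    ⟨mem_ball_self hδ, hU0⟩, ?_⟩
  rintro z ⟨hzξ, hz, -⟩
  simpa [kerProjAlong_of_mem_ker v hzξ] using hfξ hz

/-- If `f` is holomorphic near `0 ∈ ℂⁿ` with `f 0 = 0`, and the zero set of `f` in `U` is
contained in a finite union of kernels of nonzero linear functionals, then `f` vanishes
identically on `ker ξ` near `0` for one of these functionals `ξ`. -/
theorem vanishes_on_kernel_of_linear_functional
    {n : ℕ} (hn : 1 ≤ n)
    (U : Set (Fin n → ℂ)) (hU : IsOpen U) (hU0 : (0 : Fin n → ℂ) ∈ U)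
    (f : (Fin n → ℂ) → ℂ) (hf : DifferentiableOn ℂ f U) (hf0 : f 0 = 0)
    (Ξ : Set ((Fin n → ℂ) →ₗ[ℂ] ℂ)) (hΞfin : Ξ.Finite) (hΞne : ∀ ξ ∈ Ξ, ξ ≠ 0)
    (hzero : {z ∈ U | f z = 0} ⊆ ⋃ ξ ∈ Ξ, (LinearMap.ker ξ : Set (Fin n → ℂ))) :
    ∃ ξ ∈ Ξ, ∃ U' : Set (Fin n → ℂ), IsOpen U' ∧ U' ⊆ U ∧ (0 : Fin n → ℂ) ∈ U' ∧
      ∀ z ∈ (LinearMap.ker ξ : Set (Fin n → ℂ)) ∩ U', f z = 0 :=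
  vanishes_on_kernel_of_linear_functional_general U hU hU0 f hf hf0 Ξ hΞfin hΞne hzero
end

section
/- Let f : ℂⁿ → ℂ be a polynomial function of positive total degree, and let 𝓗 be a locally finite collection of affine hyperplanes in ℂⁿ such that the zero set f⁻¹(0) is contained in ⋃𝓗. Then there exists a hyperplane H ∈ 𝓗 such that f vanishes identically on H. -/
/-!
A polynomial of positive degree has a zero `z₀` (Nullstellensatz). Only finitely many hyperplanes
of `𝓗` meet a neighbourhood of `z₀`, and whenever finitely many closed sets cover a nonempty
relatively open piece of the zero set `Z`, one of them contains a smaller such piece; so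
`Z ∩ V ⊆ H` for some `H ∈ 𝓗` and some open `V` meeting `Z` at `z₁`.

Then `f` vanishes on `H`. For `w ∈ H` and a direction `v` transverse to `H`, the zeros of
`(s, t) ↦ f (z₁ + s • (w - z₁) + t • v)` near the origin lie on `t = 0`. Comparing with the
minimum of `|f|` on a small circle in `t` (minimum modulus principle, a Hurwitz-type argument)
shows that the zero at the origin persists: `f (z₁ + s • (w - z₁)) = 0` for small `s`, hence for
all `s` by the identity theorem, and `s = 1` gives `f w = 0`.
-/

open MvPolynomial

/-- An affine hyperplane in `ℂⁿ`: a set of the form `{z | λ z = c}` for a nonzero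
ℂ-linear functional `λ` and a constant `c`. -/
def IsAffineHyperplane {n : ℕ} (H : Set (Fin n → ℂ)) : Prop :=
  ∃ (lam : (Fin n → ℂ) →ₗ[ℂ] ℂ) (c : ℂ), lam ≠ 0 ∧ H = {z | lam z = c}

open Set Filter Topology Metric

theorem MvPolynomial.exists_eval_eq_zero_of_totalDegree_pos {σ K : Type*} [Finite σ] [Field K]
    [IsAlgClosed K] {f : MvPolynomial σ K} (hf : 0 < f.totalDegree) : ∃ z, eval z f = 0 := by
  by_contra! h
  have hempty : zeroLocus K (Ideal.span {f}) = ∅ := by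
    simpa [zeroLocus_span, eq_empty_iff_forall_notMem] using h
  have hunit := vanishingIdeal_zeroLocus_eq_radical (K := K) (Ideal.span {f})
  rw [hempty, vanishingIdeal_empty, eq_comm, Ideal.radical_eq_top,
    Ideal.span_singleton_eq_top] at hunit
  exact hf.ne' (isUnit_iff_totalDegree_of_isReduced.1 hunit).2

theorem Set.Finite.exists_isOpen_inter_subset_of_subset_sUnion {X : Type*} [TopologicalSpace X]
    {Z : Set X} {T : Set (Set X)} (hT : T.Finite) (hclosed : ∀ C ∈ T, IsClosed C)
    {U : Set X} (hU : IsOpen U) (hne : (Z ∩ U).Nonempty) (hcover : Z ∩ U ⊆ ⋃₀ T) :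
    ∃ C ∈ T, ∃ V, IsOpen V ∧ (Z ∩ V).Nonempty ∧ Z ∩ V ⊆ C := by
  induction T, hT using Set.Finite.induction_on generalizing U with
  | empty => simpa using hcover hne.some_mem
  | @insert C T _ _ ih =>
    by_cases hC : Z ∩ U ⊆ C
    · exact ⟨C, mem_insert C T, U, hU, hne, hC⟩
    have hC' : IsClosed C := hclosed C (mem_insert C T)
    obtain ⟨D, hD, hDV⟩ := ih (fun D hD => hclosed D (mem_insert_of_mem C hD))
      (hU.sdiff hC') (by rw [← inter_sdiff_assoc]; exact sdiff_nonempty.2 hC) fun x hx => by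
        obtain ⟨D, hD, hxD⟩ := hcover ⟨hx.1, hx.2.1⟩
        rcases hD with rfl | hD
        exacts [(hx.2.2 hxD).elim, ⟨D, hD, hxD⟩]
    exact ⟨D, mem_insert_of_mem C hD, hDV⟩

theorem MvPolynomial.differentiable_eval {𝕜 σ : Type*} [NontriviallyNormedField 𝕜] [Fintype σ]
    (p : MvPolynomial σ 𝕜) : Differentiable 𝕜 fun z : σ → 𝕜 => eval z p := fun z =>
  (AnalyticOnNhd.eval_continuousLinearMap (.id 𝕜 (σ → 𝕜)) p z trivial).differentiableAt

theorem Complex.exists_mem_sphere_norm_le_of_forall_ne_zero {g : ℂ → ℂ} {c : ℂ} {r : ℝ}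
    (hr : 0 < r) (hg : DifferentiableOn ℂ g (closedBall c r))
    (hne : ∀ z ∈ closedBall c r, g z ≠ 0) : ∃ z ∈ sphere c r, ‖g z‖ ≤ ‖g c‖ := by
  have hd : DiffContOnCl ℂ g⁻¹ (ball c r) := by
    rw [← closure_ball c hr.ne'] at hg hne
    exact (hg.inv hne).diffContOnCl
  obtain ⟨z, hz, hmax⟩ := exists_mem_frontier_isMaxOn_norm isBounded_ball
    (nonempty_ball.2 hr) hd
  rw [frontier_ball c hr.ne'] at hz
  refine ⟨z, hz, ?_⟩
  have := hmax (subset_closure (mem_ball_self hr))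
  simp only [mem_ofPred_eq, Function.comp_apply, Pi.inv_apply, norm_inv] at this
  exact (inv_le_inv₀ (norm_pos_iff.2 (hne c (mem_closedBall_self hr.le)))
    (norm_pos_iff.2 (hne z (sphere_subset_closedBall hz)))).1 this

theorem Complex.eventually_eq_zero_of_zeros_subset_slice {X : Type*} [TopologicalSpace X]
    {φ : X → ℂ → ℂ} {x₀ : X} (hcont : Continuous (Function.uncurry φ))
    (hdiff : ∀ x, Differentiable ℂ (φ x)) (h₀ : φ x₀ 0 = 0)
    (hzeros : ∀ᶠ p in 𝓝 (x₀, (0 : ℂ)), φ p.1 p.2 = 0 → p.2 = 0) :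
    ∀ᶠ x in 𝓝 x₀, φ x 0 = 0 := by
  obtain ⟨U, hU, r, hr, hUr⟩ : ∃ U ∈ 𝓝 x₀, ∃ r > 0,
      ∀ x ∈ U, ∀ t ∈ closedBall (0 : ℂ) r, φ x t = 0 → t = 0 := by
    rw [nhds_prod_eq, eventually_prod_iff] at hzeros
    obtain ⟨pU, hpU, pB, hpB, hUB⟩ := hzeros
    obtain ⟨r, hr, hB⟩ := nhds_basis_closedBall.eventually_iff.1 hpB
    exact ⟨_, hpU, r, hr, fun x hx t ht => hUB hx (hB ht)⟩
  have hsphere : ∀ t ∈ sphere (0 : ℂ) r, ∀ᶠ p : X × ℂ in 𝓝 (x₀, t), ‖φ p.1 0‖ < ‖φ p.1 p.2‖ := by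
    intro t ht
    refine ContinuousAt.eventually_lt
      (hcont.comp (continuous_fst.prodMk continuous_const)).norm.continuousAt
      hcont.norm.continuousAt ?_
    rw [h₀, norm_zero, norm_pos_iff]
    exact fun h => ne_of_mem_sphere ht hr.ne'
      (hUr x₀ (mem_of_mem_nhds hU) t (sphere_subset_closedBall ht) h)
  filter_upwards [hU, (isCompact_sphere (0 : ℂ) r).eventually_forall_of_forall_eventually
    (P := fun x t => ‖φ x 0‖ < ‖φ x t‖) hsphere] with x hxU hx
  by_contra hne
  obtain ⟨t, ht, hle⟩ := Complex.exists_mem_sphere_norm_le_of_forall_ne_zero hr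
    (hdiff x).differentiableOn fun t ht h => hne (hUr x hxU t ht h ▸ h)
  exact (hx t ht).not_ge hle

theorem eq_zero_of_mem_hyperplane_of_eventually_zeros_subset {E : Type*} [NormedAddCommGroup E]
    [NormedSpace ℂ E] {f : E → ℂ} (hf : Differentiable ℂ f) {lam : E →ₗ[ℂ] ℂ} (hlam : lam ≠ 0)
    {c : ℂ} {z₁ : E} (hz₁ : f z₁ = 0) (hloc : ∀ᶠ z in 𝓝 z₁, f z = 0 → lam z = c) {w : E}
    (hw : lam w = c) : f w = 0 := by
  obtain ⟨v, hv⟩ : ∃ v, lam v ≠ 0 := by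
    by_contra! h
    exact hlam (LinearMap.ext h)
  have hz₁c : lam z₁ = c := hloc.self_of_nhds hz₁
  set line : ℂ → ℂ → E := fun s t => z₁ + s • (w - z₁) + t • v
  have hline : ∀ s t, lam (line s t) = c + t * lam v := by intro s t; simp [line, hz₁c, hw]
  have hline_cont : Continuous (Function.uncurry line) := by fun_prop
  have hslice : ∀ᶠ s in 𝓝 (0 : ℂ), f (line s 0) = 0 := by
    refine Complex.eventually_eq_zero_of_zeros_subset_slice (φ := fun s t => f (line s t))
      (hf.continuous.comp hline_cont) (fun s => hf.comp (by fun_prop))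
      (by simpa [line] using hz₁) ?_
    have : Tendsto (Function.uncurry line) (𝓝 (0, 0)) (𝓝 z₁) := by
      simpa [line] using hline_cont.tendsto (0, 0)
    filter_upwards [this.eventually hloc] with ⟨s, t⟩ hp h0
    have := hp h0
    simp only [Function.uncurry_apply_pair, hline] at this
    simpa [hv] using this
  have hanalytic : AnalyticOnNhd ℂ (fun s => f (line s 0)) univ :=
    fun s _ => (hf.comp (by fun_prop)).analyticAt s
  simpa [line] using hanalytic.eqOn_zero_of_preconnected_of_eventuallyEq_zero isPreconnected_univ
    (mem_univ 0) hslice (mem_univ 1)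

/-- If the zero set of a polynomial of positive total degree on `ℂⁿ` is contained in the union
of a locally finite collection `𝓗` of affine hyperplanes, then the polynomial vanishes
identically on one of the hyperplanes of `𝓗`. -/
theorem vanishing_on_some_hyperplane
    {n : ℕ} (f : MvPolynomial (Fin n) ℂ) (hdeg : 0 < f.totalDegree)
    (𝓗 : Set (Set (Fin n → ℂ)))
    (h𝓗 : ∀ H ∈ 𝓗, IsAffineHyperplane H)
    (hlf : ∀ z : Fin n → ℂ, ∃ U ∈ nhds z, {H ∈ 𝓗 | (H ∩ U).Nonempty}.Finite)
    (hzero : {z : Fin n → ℂ | eval z f = 0} ⊆ ⋃₀ 𝓗) :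
    ∃ H ∈ 𝓗, ∀ z ∈ H, eval z f = 0 := by
  obtain ⟨z₀, hz₀⟩ := exists_eval_eq_zero_of_totalDegree_pos hdeg
  obtain ⟨U, hU, hfin⟩ := hlf z₀
  have hclosed : ∀ H ∈ {H ∈ 𝓗 | (H ∩ U).Nonempty}, IsClosed H := by
    rintro H ⟨hH, -⟩
    obtain ⟨lam, c, -, rfl⟩ := h𝓗 H hH
    exact isClosed_eq (LinearMap.continuous_of_finiteDimensional lam) continuous_const
  obtain ⟨H, ⟨hH, -⟩, V, hV, ⟨z₁, hz₁, hz₁V⟩, hVH⟩ :=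
    hfin.exists_isOpen_inter_subset_of_subset_sUnion (Z := {z | eval z f = 0}) hclosed
      isOpen_interior ⟨z₀, hz₀, mem_interior_iff_mem_nhds.2 hU⟩ fun z hz => by
        obtain ⟨H, hH, hzH⟩ := hzero hz.1
        exact ⟨H, ⟨hH, z, hzH, interior_subset hz.2⟩, hzH⟩
  obtain ⟨lam, c, hlam, rfl⟩ := h𝓗 H hH
  refine ⟨_, hH, fun w hw => eq_zero_of_mem_hyperplane_of_eventually_zeros_subset
    (differentiable_eval f) hlam hz₁ ?_ hw⟩
  filter_upwards [hV.mem_nhds hz₁V] with z hz hz0 using hVH ⟨hz0, hz⟩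
end

section
/- With the notation of the context: the space V is the disjoint union of the sets V(Φ) = ′V_Φ⁻ + cl(V_Φ⁺), taken over all subsets Φ ⊆ Δ. That is, every H ∈ V lies in exactly one of the sets V(Φ), Φ ⊆ Δ. -/
/-!
Given `H`, take `Φ = {i | Δ i H < 0}`. The part `H₁ = ∑ j, min (Δ j H) 0 • h j` lies in `′V_Φ⁻`
because `Δ i H₁ = min (Δ i H) 0`, and the rest `H₂ = H - H₁` has `Δ i H₂ = max (Δ i H) 0`, so it
lies in the closure of `V_Φ⁺`, which is cut out by `Δ i = 0` on `Φ` and `Δ i ≥ 0` off `Φ`.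
Conversely, in any such decomposition `Δ i H₁` vanishes off `Φ` and `Δ i H₂` vanishes on `Φ`,
so the sign of `Δ i H` recovers `Φ`.
-/

open Filter Topology

namespace Chamber

variable {V ι : Type*} [AddCommGroup V] [Module ℝ V]

/-- The paper's `′V_Φ⁻`. -/
def negativeSpanCone (Δ : ι → V →ₗ[ℝ] ℝ) (h : ι → V) (Φ : Set ι) : Set V :=
  {y | y ∈ Submodule.span ℝ (h '' Φ) ∧ ∀ i ∈ Φ, Δ i y < 0}

/-- The paper's `V_Φ⁺`. -/
def positiveFace (Δ : ι → V →ₗ[ℝ] ℝ) (Φ : Set ι) : Set V :=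
  {y | (∀ i ∈ Φ, Δ i y = 0) ∧ ∀ i ∉ Φ, 0 < Δ i y}

def closedPositiveFace (Δ : ι → V →ₗ[ℝ] ℝ) (Φ : Set ι) : Set V :=
  {y | (∀ i ∈ Φ, Δ i y = 0) ∧ ∀ i ∉ Φ, 0 ≤ Δ i y}

def negativePart [Fintype ι] (Δ : ι → V →ₗ[ℝ] ℝ) (h : ι → V) (H : V) : V :=
  ∑ j, min (Δ j H) 0 • h j

theorem negativePart_mem_span [Fintype ι] {Δ : ι → V →ₗ[ℝ] ℝ} {h : ι → V} (H : V) :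
    negativePart Δ h H ∈ Submodule.span ℝ (h '' {i | Δ i H < 0}) := by
  refine Submodule.sum_mem _ fun j _ => ?_
  by_cases hj : Δ j H < 0
  · exact Submodule.smul_mem _ _ (Submodule.subset_span ⟨j, hj, rfl⟩)
  · simp [min_eq_right (not_lt.mp hj)]

section Dual

variable [DecidableEq ι] {Δ : ι → V →ₗ[ℝ] ℝ} {h : ι → V}
  (hdual : ∀ i j, Δ i (h j) = if i = j then 1 else 0)
include hdual

theorem apply_sum_smul [Fintype ι] (c : ι → ℝ) (i : ι) : Δ i (∑ j, c j • h j) = c i := by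
  simp [map_sum, hdual]

theorem apply_eq_zero_of_mem_span {Φ : Set ι} {i : ι} (hi : i ∉ Φ) {y : V}
    (hy : y ∈ Submodule.span ℝ (h '' Φ)) : Δ i y = 0 := by
  refine (Submodule.span_le (p := LinearMap.ker (Δ i))).mpr ?_ hy
  rintro _ ⟨j, hj, rfl⟩
  simp [hdual, show i ≠ j by rintro rfl; exact hi hj]

theorem closure_positiveFace [Fintype ι] [TopologicalSpace V] [IsTopologicalAddGroup V]
    [ContinuousSMul ℝ V] (hcont : ∀ i, Continuous (Δ i)) (Φ : Set ι) :
    closure (positiveFace Δ Φ) = closedPositiveFace Δ Φ := by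
  refine subset_antisymm (closure_minimal (fun y hy => ⟨hy.1, fun i hi => (hy.2 i hi).le⟩) ?_)
    fun y hy => ?_
  · simp only [closedPositiveFace, Set.ofPred_and, Set.ofPred_forall]
    exact ((isClosed_biInter fun i _ => isClosed_eq (hcont i) continuous_const).inter
      (isClosed_biInter fun i _ => isClosed_le continuous_const (hcont i)))
  -- `y` is approached from inside the face along `y + t • ∑_{j ∉ Φ} h j`, `t → 0⁺`.
  set z : V := ∑ j, Φᶜ.indicator (1 : ι → ℝ) j • h j
  have hz : ∀ i, Δ i z = Φᶜ.indicator (1 : ι → ℝ) i := apply_sum_smul hdual _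
  have htend : Tendsto (fun t : ℝ => y + t • z) (𝓝[>] 0) (𝓝 y) := by
    have : Continuous fun t : ℝ => y + t • z := by fun_prop
    simpa using (this.tendsto 0).mono_left nhdsWithin_le_nhds
  refine mem_closure_of_tendsto htend (eventually_nhdsWithin_of_forall fun t ht => ?_)
  refine ⟨fun i hi => by simp [hy.1 i hi, hz, hi], fun i hi => ?_⟩
  simpa [hz, hi] using add_pos_of_nonneg_of_pos (hy.2 i hi) ht

theorem eq_setOf_apply_neg {Φ : Set ι} {H₁ H₂ : V} (hH₁ : H₁ ∈ negativeSpanCone Δ h Φ)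
    (hH₂ : H₂ ∈ closedPositiveFace Δ Φ) : Φ = {i | Δ i (H₁ + H₂) < 0} := by
  ext i
  simp only [Set.mem_ofPred_eq, map_add]
  by_cases hi : i ∈ Φ
  · simpa [hi, hH₂.1 i hi] using hH₁.2 i hi
  · simpa [hi, apply_eq_zero_of_mem_span hdual hi hH₁.1] using hH₂.2 i hi

variable [Fintype ι]

theorem negativePart_mem_negativeSpanCone (H : V) :
    negativePart Δ h H ∈ negativeSpanCone Δ h {i | Δ i H < 0} :=
  ⟨negativePart_mem_span H, fun i hi => by
    simpa [negativePart, apply_sum_smul hdual] using hi⟩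

theorem sub_negativePart_mem_closedPositiveFace (H : V) :
    H - negativePart Δ h H ∈ closedPositiveFace Δ {i | Δ i H < 0} := by
  have hΔ : ∀ i, Δ i (H - negativePart Δ h H) = max (Δ i H) 0 := fun i => by
    rw [map_sub, negativePart, apply_sum_smul hdual]
    linarith [min_add_max (Δ i H) 0]
  exact ⟨fun i hi => by simp [hΔ, (show Δ i H < 0 from hi).le],
    fun i _ => hΔ i ▸ le_max_right _ _⟩

end Dual

end Chamber

open Chamber in
theorem chamber_decomposition_general
    {V : Type*} [NormedAddCommGroup V] [InnerProductSpace ℝ V] [FiniteDimensional ℝ V]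
    {ι : Type*} [Fintype ι] [DecidableEq ι]
    (Δ : ι → (V →ₗ[ℝ] ℝ))
    (h : ι → V)
    (hdual : ∀ i j, Δ i (h j) = if i = j then 1 else 0) :
    ∀ H : V, ∃! Φ : Set ι,
      ∃ H₁ ∈ {y : V | y ∈ Submodule.span ℝ (h '' Φ) ∧ ∀ i ∈ Φ, Δ i y < 0},
        ∃ H₂ ∈ closure {y : V | (∀ i ∈ Φ, Δ i y = 0) ∧ ∀ i ∉ Φ, 0 < Δ i y},
          H = H₁ + H₂ := by
  have hclosure :=
    closure_positiveFace hdual fun i => LinearMap.continuous_of_finiteDimensional (Δ i)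
  intro H
  refine ⟨{i | Δ i H < 0}, ⟨negativePart Δ h H, negativePart_mem_negativeSpanCone hdual H,
    H - negativePart Δ h H, ?_, (add_sub_cancel _ _).symm⟩, ?_⟩
  · exact (hclosure _).ge (sub_negativePart_mem_closedPositiveFace hdual H)
  · rintro Φ ⟨H₁, hH₁, H₂, hH₂, rfl⟩
    exact eq_setOf_apply_neg hdual hH₁ ((hclosure Φ).le hH₂)

/-- Chamber decomposition: let `V` be a finite-dimensional real inner product space and
`Δ = (Δ i)` a finite linearly independent family of linear functionals on `V`.  Let `(h i)` be
the family in the orthogonal complement of `⋂ ker (Δ j)` dual to the restrictions of the `Δ i`,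
i.e. `Δ i (h j) = δᵢⱼ`.  For `Φ ⊆ Δ` put `′V_Φ⁻ = {y ∈ span {h i : i ∈ Φ} | Δ i y < 0 ∀ i ∈ Φ}`
and `V_Φ⁺ = {y | Δ i y = 0 ∀ i ∈ Φ, Δ i y > 0 ∀ i ∉ Φ}`. Then `V` is the disjoint union of the
sets `V(Φ) = ′V_Φ⁻ + cl(V_Φ⁺)`, i.e. every `H ∈ V` lies in exactly one `V(Φ)`. -/
theorem chamber_decomposition
    {V : Type*} [NormedAddCommGroup V] [InnerProductSpace ℝ V] [FiniteDimensional ℝ V]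
    {ι : Type*} [Fintype ι] [DecidableEq ι]
    (Δ : ι → (V →ₗ[ℝ] ℝ)) (hΔ : LinearIndependent ℝ Δ)
    (h : ι → V)
    (hhW : ∀ i, h i ∈ (⨅ j, LinearMap.ker (Δ j) : Submodule ℝ V)ᗮ)
    (hdual : ∀ i j, Δ i (h j) = if i = j then 1 else 0) :
    ∀ H : V, ∃! Φ : Set ι,
      ∃ H₁ ∈ {y : V | y ∈ Submodule.span ℝ (h '' Φ) ∧ ∀ i ∈ Φ, Δ i y < 0},
        ∃ H₂ ∈ closure {y : V | (∀ i ∈ Φ, Δ i y = 0) ∧ ∀ i ∉ Φ, 0 < Δ i y},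
          H = H₁ + H₂ :=
  chamber_decomposition_general Δ h hdual
end
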